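/- arXiv:1608.03163 — 4 statements merged into one kernel-verified Lean document; each statement's English description precedes it below -/
import Mathlib

section
/- Let d, n ≥ 1 and let U be a nonempty connected open subset of ℂ^d. Let α be a positive integer, let h₁, …, h_n : U → ℂ be holomorphic, and let (f_j)_{j∈ℕ} be a sequence of holomorphic functions U → ℂ such that for every z ∈ U the family (|f_j(z)|²)_{j∈ℕ} is summable and (1 + Σ_{i=1}^n |h_i(z)|²)^α = 1 + ∑'_{j∈ℕ} |f_j(z)|². Then the ℂ-linear subspace of the space of functions U → ℂ spanned by {f_j : j ∈ ℕ} has dimension at most (n+α choose n); in particular, the infinite family (f_j)_{j∈ℕ} is not linearly independent over ℂ. -/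
/-!
By the multinomial theorem, `1 + ∑' j, ‖f j z‖ ^ 2 = ∑ k, C k * ‖P k z‖ ^ 2` with finitely many
monomials `P k` of degree `α` in `(1, h₁, …, hₙ)` and positive weights `C k`; there are
`(n + α).choose n` of them. This identity polarizes: on a complex line `t ↦ m + t • u` both
`t ↦ ∑ k, C k * P k (m + t • u) * conj (P k (m + conj t • u))` and the corresponding series in the
`f j` are holomorphic (the series converges locally uniformly by Dini's theorem), and they agree for
real `t`. So `∑ k, C k * P k z * conj (P k w) = 1 + ∑' j, f j z * conj (f j w)` on a ball, and
expanding the squared norm of a combination shows that any finite linear relation among point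
evaluations that kills all `P k` kills every `f j`. Hence each `f j` lies in the span of the `P k`
on the ball, and by the identity theorem on all of `U`.
-/

open Filter Topology Set
open scoped ComplexConjugate

section SquareSummable

variable {ι : Type*} {u v : ι → ℂ}

lemma norm_mul_conj_le (a b : ℂ) : ‖a * conj b‖ ≤ (‖a‖ ^ 2 + ‖b‖ ^ 2) / 2 := by
  rw [norm_mul, RCLike.norm_conj]
  nlinarith [sq_nonneg (‖a‖ - ‖b‖)]

lemma summable_norm_mul_conj (hu : Summable fun j => ‖u j‖ ^ 2)
    (hv : Summable fun j => ‖v j‖ ^ 2) : Summable fun j => ‖u j * conj (v j)‖ :=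
  ((hu.add hv).div_const 2).of_nonneg_of_le (fun _ => norm_nonneg _)
    fun _ => norm_mul_conj_le _ _

lemma norm_tsum_mul_conj_sub_sum_le (hu : Summable fun j => ‖u j‖ ^ 2)
    (hv : Summable fun j => ‖v j‖ ^ 2) (s : Finset ι) :
    ‖∑' j, u j * conj (v j) - ∑ j ∈ s, u j * conj (v j)‖ ≤
      ((∑' j, ‖u j‖ ^ 2 - ∑ j ∈ s, ‖u j‖ ^ 2) + (∑' j, ‖v j‖ ^ 2 - ∑ j ∈ s, ‖v j‖ ^ 2)) / 2 := by
  have huv := summable_norm_mul_conj hu hv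
  rw [← huv.of_norm.sum_add_tsum_compl (s := s), ← hu.sum_add_tsum_compl (s := s),
    ← hv.sum_add_tsum_compl (s := s)]
  simp only [add_sub_cancel_left]
  calc _ ≤ ∑' j : ↑(↑s : Set ι)ᶜ, ‖u j * conj (v j)‖ := norm_tsum_le_tsum_norm (huv.subtype _)
    _ ≤ ∑' j : ↑(↑s : Set ι)ᶜ, (‖u j‖ ^ 2 + ‖v j‖ ^ 2) / 2 :=
      Summable.tsum_le_tsum (fun _ => norm_mul_conj_le _ _) (huv.subtype _)
        (((hu.add hv).div_const 2).subtype _)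
    _ = _ := by rw [tsum_div_const]; exact congrArg (· / 2) ((hu.subtype _).tsum_add (hv.subtype _))

end SquareSummable

section LocallyUniform

variable {X Y ι : Type*} [TopologicalSpace X] [TopologicalSpace Y] {U : Set X}
  {f : ι → X → ℂ}

lemma tendstoLocallyUniformlyOn_sum_sq_norm (hf : ∀ j, ContinuousOn (f j) U)
    (hsum : ∀ z ∈ U, Summable fun j => ‖f j z‖ ^ 2)
    (hcont : ContinuousOn (fun z => ∑' j, ‖f j z‖ ^ 2) U) :
    TendstoLocallyUniformlyOn (fun s z => ∑ j ∈ s, ‖f j z‖ ^ 2)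
      (fun z => ∑' j, ‖f j z‖ ^ 2) atTop U :=
  Monotone.tendstoLocallyUniformlyOn_of_forall_tendsto
    (fun _ => continuousOn_finsetSum _ fun j _ => (hf j).norm.pow 2)
    (fun _ _ _ _ hst => Finset.sum_le_sum_of_subset_of_nonneg hst fun _ _ _ => sq_nonneg _)
    hcont fun z hz => (hsum z hz).hasSum

lemma TendstoLocallyUniformlyOn.sum_mul_conj_comp {V : Set Y} {a b : Y → X}
    (hunif : TendstoLocallyUniformlyOn (fun s z => ∑ j ∈ s, ‖f j z‖ ^ 2)
      (fun z => ∑' j, ‖f j z‖ ^ 2) atTop U)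
    (hsum : ∀ z ∈ U, Summable fun j => ‖f j z‖ ^ 2)
    (ha : ContinuousOn a V) (hb : ContinuousOn b V) (haU : MapsTo a V U) (hbU : MapsTo b V U) :
    TendstoLocallyUniformlyOn (fun s y => ∑ j ∈ s, f j (a y) * conj (f j (b y)))
      (fun y => ∑' j, f j (a y) * conj (f j (b y))) atTop V := by
  have hA := Metric.tendstoLocallyUniformlyOn_iff.1 (hunif.comp a haU ha)
  have hB := Metric.tendstoLocallyUniformlyOn_iff.1 (hunif.comp b hbU hb)
  refine Metric.tendstoLocallyUniformlyOn_iff.2 fun ε hε y hy => ?_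
  obtain ⟨tA, htA, hA⟩ := hA ε hε y hy
  obtain ⟨tB, htB, hB⟩ := hB ε hε y hy
  refine ⟨tA ∩ tB ∩ V, inter_mem (inter_mem htA htB) self_mem_nhdsWithin,
    (hA.and hB).mono fun s hs x hx => ?_⟩
  have hAx := (le_abs_self _).trans_lt (hs.1 x hx.1.1)
  have hBx := (le_abs_self _).trans_lt (hs.2 x hx.1.2)
  simp only [Function.comp_apply] at hAx hBx
  rw [dist_eq_norm]
  calc _ ≤ _ := norm_tsum_mul_conj_sub_sum_le (hsum _ (haU hx.2)) (hsum _ (hbU hx.2)) s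
    _ < ε := by linarith

end LocallyUniform

section Polarization

variable {E : Type*} [NormedAddCommGroup E] [NormedSpace ℂ E] {U : Set E}

lemma DifferentiableOn.mul_conj_comp_line {F : E → ℂ} (hF : DifferentiableOn ℂ F U)
    (hU : IsOpen U) (m u : E) :
    DifferentiableOn ℂ (fun t : ℂ => F (m + t • u) * conj (F (m + conj t • u)))
      {t | m + t • u ∈ U ∧ m + conj t • u ∈ U} := by
  have hline : Differentiable ℂ fun t : ℂ => m + t • u :=
    (differentiable_id.smul_const u).const_add m
  have hFline : ∀ t, m + t • u ∈ U → DifferentiableAt ℂ (fun t : ℂ => F (m + t • u)) t :=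
    fun t ht => (hF.differentiableAt (hU.mem_nhds ht)).comp t (hline t)
  intro t ht
  refine ((hFline t ht.1).mul ?_).differentiableWithinAt
  exact differentiableAt_conj_conj_iff.2 (hFline _ ht.2)

variable {ι κ : Type*} [Fintype κ] {P : κ → E → ℂ} {C : κ → ℝ} {f : ι → E → ℂ}

theorem sum_mul_conj_eq_tsum_mul_conj_of_mem_line (hUo : IsOpen U) (hUc : Convex ℝ U)
    (hP : ∀ k, DifferentiableOn ℂ (P k) U) (hf : ∀ j, DifferentiableOn ℂ (f j) U)
    (hsum : ∀ z ∈ U, Summable fun j => ‖f j z‖ ^ 2)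
    (hdiag : ∀ z ∈ U, ∑ k, C k * ‖P k z‖ ^ 2 = ∑' j, ‖f j z‖ ^ 2)
    {m u : E} {t : ℂ} (ht : m + t • u ∈ U) (ht' : m + conj t • u ∈ U) :
    ∑ k, (C k : ℂ) * (P k (m + t • u) * conj (P k (m + conj t • u))) =
      ∑' j, f j (m + t • u) * conj (f j (m + conj t • u)) := by
  set D := {s : ℂ | m + s • u ∈ U ∧ m + conj s • u ∈ U}
  have hline : Continuous fun s : ℂ => m + s • u := by fun_prop
  have hline' : Continuous fun s : ℂ => m + conj s • u := by fun_prop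
  have hDo : IsOpen D := (hUo.preimage hline).inter (hUo.preimage hline')
  have hDc : Convex ℝ D := by
    intro s₁ hs₁ s₂ hs₂ a b ha hb hab
    have key : ∀ x₁ x₂ : ℂ, m + (a • x₁ + b • x₂) • u =
        a • (m + x₁ • u) + b • (m + x₂ • u) := fun x₁ x₂ => by
      rw [add_smul, smul_assoc, smul_assoc, smul_add, smul_add, add_add_add_comm, ← add_smul, hab,
        one_smul]
    refine ⟨?_, ?_⟩
    · simpa only [key] using hUc hs₁.1 hs₂.1 ha hb hab
    · simpa only [map_add, RCLike.conj_smul, key] using hUc hs₁.2 hs₂.2 ha hb hab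
  have hreD : (t.re : ℂ) ∈ D := by
    have hconj : conj t ∈ D := ⟨ht', by simpa using ht⟩
    have := hDc ⟨ht, ht'⟩ hconj (by norm_num : (0 : ℝ) ≤ 2⁻¹) (by norm_num : (0 : ℝ) ≤ 2⁻¹)
      (by norm_num)
    convert this using 1
    apply Complex.ext <;> simp; ring
  set G : ℂ → ℂ := fun s => ∑ k, (C k : ℂ) * (P k (m + s • u) * conj (P k (m + conj s • u)))
  set g : ℂ → ℂ := fun s => ∑' j, f j (m + s • u) * conj (f j (m + conj s • u))
  have hG : DifferentiableOn ℂ G D := DifferentiableOn.fun_sum fun k _ =>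
    (differentiableOn_const _).mul ((hP k).mul_conj_comp_line hUo m u)
  have hcont : ContinuousOn (fun z => ∑' j, ‖f j z‖ ^ 2) U :=
    (continuousOn_finsetSum _ fun k _ =>
      continuousOn_const.mul ((hP k).continuousOn.norm.pow 2)).congr fun z hz => (hdiag z hz).symm
  have hunif := (tendstoLocallyUniformlyOn_sum_sq_norm (fun j => (hf j).continuousOn) hsum
    hcont).sum_mul_conj_comp hsum hline.continuousOn hline'.continuousOn (V := D) (fun _ hs => hs.1)
    (fun _ hs => hs.2)
  have hg : DifferentiableOn ℂ g D := hunif.differentiableOn (Eventually.of_forall fun s =>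
    DifferentiableOn.fun_sum fun j _ => (hf j).mul_conj_comp_line hUo m u) hDo
  -- on the real points of `D` both sides are the two sides of `hdiag`
  have hreal : ∀ x : ℝ, (x : ℂ) ∈ D → G x - g x = 0 := by
    intro x hx
    simp only [G, g, Complex.conj_ofReal, Complex.mul_conj', ← Complex.ofReal_pow,
      ← Complex.ofReal_mul, ← Complex.ofReal_sum, ← Complex.ofReal_tsum, hdiag _ hx.1, sub_self]
  have hfreq : ∃ᶠ s in 𝓝[≠] (t.re : ℂ), G s - g s = 0 := by
    have hofReal : Tendsto (fun y : ℝ => (y : ℂ)) (𝓝[≠] t.re) (𝓝[≠] (t.re : ℂ)) :=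
      tendsto_nhdsWithin_iff.2
        ⟨(Complex.continuous_ofReal.tendsto _).mono_left nhdsWithin_le_nhds,
          eventually_nhdsWithin_of_forall fun y hy => by simpa using hy⟩
    refine hofReal.frequently (Eventually.frequently ?_)
    filter_upwards [nhdsWithin_le_nhds ((hDo.preimage Complex.continuous_ofReal).mem_nhds hreD)]
      with x hx using hreal x hx
  exact sub_eq_zero.1 <| ((hG.sub hg).analyticOnNhd hDo)
    |>.eqOn_zero_of_preconnected_of_frequently_eq_zero hDc.isPreconnected hreD hfreq ⟨ht, ht'⟩

theorem sum_mul_conj_eq_tsum_mul_conj (hUo : IsOpen U) (hUc : Convex ℝ U)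
    (hP : ∀ k, DifferentiableOn ℂ (P k) U) (hf : ∀ j, DifferentiableOn ℂ (f j) U)
    (hsum : ∀ z ∈ U, Summable fun j => ‖f j z‖ ^ 2)
    (hdiag : ∀ z ∈ U, ∑ k, C k * ‖P k z‖ ^ 2 = ∑' j, ‖f j z‖ ^ 2)
    {z w : E} (hz : z ∈ U) (hw : w ∈ U) :
    ∑ k, (C k : ℂ) * (P k z * conj (P k w)) = ∑' j, f j z * conj (f j w) := by
  -- the line `t ↦ m + t • u` with `m = (z + w) / 2`, `u = -(I / 2) • (z - w)` meets `z` at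
  -- `t = I` and `w` at `t = conj I`
  have hz' : (2⁻¹ : ℂ) • (z + w) + Complex.I • ((-(Complex.I / 2)) • (z - w)) = z := by
    linear_combination (norm := module) Complex.I_mul_I • ((-(2⁻¹ : ℂ)) • (z - w))
  have hw' : (2⁻¹ : ℂ) • (z + w) + conj Complex.I • ((-(Complex.I / 2)) • (z - w)) = w := by
    rw [Complex.conj_I]
    linear_combination (norm := module) Complex.I_mul_I • ((2⁻¹ : ℂ) • (z - w))
  have := sum_mul_conj_eq_tsum_mul_conj_of_mem_line hUo hUc hP hf hsum hdiag
    (hz'.symm ▸ hz) (hw'.symm ▸ hw)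
  rwa [hz', hw'] at this

end Polarization

section Span

variable {Z ι κ : Type*}

lemma hasSum_mul_linearCombination_mul_conj (c : ι → ℂ) (g : ι → Z → ℂ)
    (hg : ∀ a b, Summable fun i => c i * (g i a * conj (g i b))) (μ : Z →₀ ℂ) :
    HasSum (fun i => c i * (Finsupp.linearCombination ℂ (g i) μ *
        conj (Finsupp.linearCombination ℂ (g i) μ)))
      (∑ a ∈ μ.support, ∑ b ∈ μ.support,
        μ a * conj (μ b) * ∑' i, c i * (g i a * conj (g i b))) := by
  have hexp : ∀ i, c i * (Finsupp.linearCombination ℂ (g i) μ *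
      conj (Finsupp.linearCombination ℂ (g i) μ)) = ∑ a ∈ μ.support, ∑ b ∈ μ.support,
        μ a * conj (μ b) * (c i * (g i a * conj (g i b))) := by
    intro i
    rw [Finsupp.linearCombination_apply, Finsupp.sum, map_sum, Finset.sum_mul_sum, Finset.mul_sum]
    refine Finset.sum_congr rfl fun a _ => ?_
    rw [Finset.mul_sum]
    refine Finset.sum_congr rfl fun b _ => ?_
    simp only [smul_eq_mul, map_mul]
    ring
  simp only [hexp]
  exact hasSum_sum fun a _ => hasSum_sum fun b _ => ((hg a b).hasSum).mul_left _

theorem mem_span_of_sum_mul_conj_eq_tsum_mul_conj [Fintype κ] {P : κ → Z → ℂ} {C : κ → ℂ}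
    {f : ι → Z → ℂ} (hsum : ∀ z, Summable fun i => ‖f i z‖ ^ 2)
    (hK : ∀ z w, ∑ k, C k * (P k z * conj (P k w)) = ∑' i, f i z * conj (f i w)) (i : ι) :
    f i ∈ Submodule.span ℂ (Set.range P) := by
  set L : κ → (Z →₀ ℂ) →ₗ[ℂ] ℂ := fun k => Finsupp.linearCombination ℂ (P k)
  set Λ : ι → (Z →₀ ℂ) →ₗ[ℂ] ℂ := fun i => Finsupp.linearCombination ℂ (f i)
  -- a finite relation among the values of the `P k` is also one among the values of the `f i`
  have hker : ⨅ k, LinearMap.ker (L k) ≤ LinearMap.ker (Λ i) := by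
    intro μ hμ
    simp only [Submodule.mem_iInf, LinearMap.mem_ker] at hμ ⊢
    have hgramP := hasSum_mul_linearCombination_mul_conj C P (fun _ _ => Summable.of_finite) μ
    have hgramf := hasSum_mul_linearCombination_mul_conj 1 f
      (fun a b => by simpa using (summable_norm_mul_conj (hsum a) (hsum b)).of_norm) μ
    simp only [L] at hμ
    simp only [hμ, map_zero, mul_zero, tsum_fintype, hK] at hgramP
    simp only [Pi.one_apply, one_mul, ← hasSum_zero.unique hgramP, Complex.mul_conj',
      ← Complex.ofReal_pow, ← Complex.ofReal_zero, Complex.hasSum_ofReal] at hgramf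
    simpa using congrFun ((hasSum_zero_iff_of_nonneg fun _ => sq_nonneg _).1 hgramf) i
  obtain ⟨c, hc⟩ := (Submodule.mem_span_range_iff_exists_fun ℂ).1 (mem_span_of_iInf_ker_le_ker hker)
  refine (Submodule.mem_span_range_iff_exists_fun ℂ).2 ⟨c, funext fun z => ?_⟩
  simpa [L, Λ] using LinearMap.congr_fun hc (Finsupp.single z 1)

end Span

section Extension

variable {E : Type*} [NormedAddCommGroup E] [NormedSpace ℂ E] {κ : Type*} [Fintype κ]
  {U : Set E} {P : κ → E → ℂ}

theorem domRestrict_mem_span_of_isPreconnected {V : Set E} (hU : IsPreconnected U)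
    (hV : IsOpen V) (hVU : V ⊆ U) (hVne : V.Nonempty) {g : E → ℂ}
    (hP : ∀ k, AnalyticOnNhd ℂ (P k) U) (hg : AnalyticOnNhd ℂ g U)
    (h : V.domRestrict g ∈ Submodule.span ℂ (Set.range fun k => V.domRestrict (P k))) :
    U.domRestrict g ∈ Submodule.span ℂ (Set.range fun k => U.domRestrict (P k)) := by
  obtain ⟨c, hc⟩ := (Submodule.mem_span_range_iff_exists_fun ℂ).1 h
  obtain ⟨z₀, hz₀⟩ := hVne
  have hzero : EqOn (fun z => g z - ∑ k, c k * P k z) 0 U := by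
    refine (hg.sub (Finset.analyticOnNhd_fun_sum _ fun k _ => analyticOnNhd_const.mul (hP k))
      ).eqOn_zero_of_preconnected_of_eventuallyEq_zero hU (hVU hz₀) ?_
    filter_upwards [hV.mem_nhds hz₀] with z hz
    simpa [sub_eq_zero] using (congrFun hc ⟨z, hz⟩).symm
  refine (Submodule.mem_span_range_iff_exists_fun ℂ).2 ⟨c, funext fun z => ?_⟩
  have := hzero z.2
  simp only [Pi.zero_apply, sub_eq_zero] at this
  simpa using this.symm

theorem domRestrict_mem_span_of_sum_sq_norm_eq (hUo : IsOpen U) (hUc : IsConnected U)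
    {ι : Type*} {C : κ → ℝ} {f : ι → E → ℂ}
    (hP : ∀ k, AnalyticOnNhd ℂ (P k) U) (hf : ∀ j, AnalyticOnNhd ℂ (f j) U)
    (hsum : ∀ z ∈ U, Summable fun j => ‖f j z‖ ^ 2)
    (hdiag : ∀ z ∈ U, ∑ k, C k * ‖P k z‖ ^ 2 = ∑' j, ‖f j z‖ ^ 2) (j : ι) :
    U.domRestrict (f j) ∈ Submodule.span ℂ (Set.range fun k => U.domRestrict (P k)) := by
  obtain ⟨c, hc⟩ := hUc.nonempty
  obtain ⟨r, hr, hrU⟩ := Metric.isOpen_iff.1 hUo c hc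
  refine domRestrict_mem_span_of_isPreconnected hUc.isPreconnected Metric.isOpen_ball hrU
    ⟨c, Metric.mem_ball_self hr⟩ hP (hf j) ?_
  refine mem_span_of_sum_mul_conj_eq_tsum_mul_conj (C := fun k => (C k : ℂ))
    (f := fun i => (Metric.ball c r).domRestrict (f i)) (fun z => hsum z (hrU z.2))
    (fun z w => ?_) j
  exact sum_mul_conj_eq_tsum_mul_conj Metric.isOpen_ball (convex_ball c r)
    (fun k => (hP k).differentiableOn.mono hrU) (fun j => (hf j).differentiableOn.mono hrU)
    (fun z hz => hsum z (hrU hz)) (fun z hz => hdiag z (hrU hz)) z.2 w.2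

end Extension

section Monomials

open Finset

lemma sum_sq_norm_pow_eq_sum_piAntidiag {σ : Type*} [Fintype σ] [DecidableEq σ] (x : σ → ℂ)
    (α : ℕ) : (∑ i, ‖x i‖ ^ 2) ^ α =
      ∑ k ∈ univ.piAntidiag α, (Nat.multinomial univ k : ℝ) * ‖∏ i, x i ^ k i‖ ^ 2 := by
  rw [sum_pow_eq_sum_piAntidiag]
  refine sum_congr rfl fun k _ => ?_
  rw [norm_prod, ← Finset.prod_pow]
  exact congrArg _ (prod_congr rfl fun i _ => by rw [norm_pow, pow_right_comm])

lemma card_piAntidiag_univ_fin (n α : ℕ) :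
    (univ.piAntidiag α : Finset (Fin (n + 1) → ℕ)).card = (n + α).choose n := by
  rw [← map_sym_eq_piAntidiag, card_map, sym_univ, card_univ, Sym.card_sym_eq_choose,
    Fintype.card_fin, show n + 1 + α - 1 = n + α by omega, Nat.choose_symm_add]

end Monomials

lemma rank_span_range_le_card {K M : Type*} [DivisionRing K] [AddCommGroup M] [Module K M]
    {ι κ : Type*} [Fintype κ] {g : ι → M} {v : κ → M}
    (hg : ∀ j, g j ∈ Submodule.span K (Set.range v)) :
    Module.rank K (Submodule.span K (Set.range g)) ≤ Fintype.card κ :=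
  calc _ ≤ Module.rank K (Submodule.span K (Set.range v)) :=
        Submodule.rank_mono (Submodule.span_le.2 (Set.range_subset_iff.2 hg))
    _ ≤ Cardinal.mk (Set.range v) := rank_span_le _
    _ ≤ Fintype.card κ := by simpa using Cardinal.mk_range_le_lift (f := v)

theorem stmt_0_general (d n : ℕ)
    (U : Set (Fin d → ℂ)) (hUo : IsOpen U) (hUc : IsConnected U)
    (α : ℕ)
    (h : Fin n → (Fin d → ℂ) → ℂ) (hh : ∀ i, AnalyticOn ℂ (h i) U)
    (f : ℕ → (Fin d → ℂ) → ℂ) (hf : ∀ j, AnalyticOn ℂ (f j) U)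
    (hsum : ∀ z ∈ U, Summable fun j => ‖f j z‖ ^ 2)
    (heq : ∀ z ∈ U, (1 + ∑ i, ‖h i z‖ ^ 2) ^ α = 1 + ∑' j, ‖f j z‖ ^ 2) :
    Module.rank ℂ ↥(Submodule.span ℂ (Set.range fun j => U.restrict (f j)))
        ≤ ((n + α).choose n : Cardinal) ∧
      ¬ LinearIndependent ℂ (fun j => U.restrict (f j)) := by
  -- homogenize: `H = (1, h)` and `F = (1, f)`
  let H : Fin (n + 1) → (Fin d → ℂ) → ℂ := Fin.cons 1 h
  let F : ℕ → (Fin d → ℂ) → ℂ := fun j => Nat.casesOn j 1 f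
  set S : Finset (Fin (n + 1) → ℕ) := Finset.univ.piAntidiag α
  have hH : ∀ i, AnalyticOnNhd ℂ (H i) U :=
    Fin.cases analyticOnNhd_const fun i => hUo.analyticOn_iff_analyticOnNhd.1 (hh i)
  have hF : ∀ j, AnalyticOnNhd ℂ (F j) U :=
    fun j => Nat.casesOn j analyticOnNhd_const fun j => hUo.analyticOn_iff_analyticOnNhd.1 (hf j)
  have hFsum : ∀ z ∈ U, Summable fun j => ‖F j z‖ ^ 2 :=
    fun z hz => (summable_nat_add_iff 1).1 (hsum z hz)
  have hdiag : ∀ z ∈ U, ∑ k : S, (Nat.multinomial Finset.univ (k : Fin (n + 1) → ℕ) : ℝ) *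
      ‖∏ i, H i z ^ (k : Fin (n + 1) → ℕ) i‖ ^ 2 = ∑' j, ‖F j z‖ ^ 2 := fun z hz =>
    calc _ = (∑ i, ‖H i z‖ ^ 2) ^ α := by
          rw [sum_sq_norm_pow_eq_sum_piAntidiag]
          exact Finset.sum_coe_sort S fun k => (Nat.multinomial Finset.univ k : ℝ) *
            ‖∏ i, H i z ^ k i‖ ^ 2
      _ = ∑' j, ‖F j z‖ ^ 2 := by
          rw [Fin.sum_univ_succ, (hFsum z hz).tsum_eq_zero_add]
          simpa [H, F] using heq z hz
  have hspan : ∀ j, U.domRestrict (f j) ∈ Submodule.span ℂ (Set.range fun k : S =>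
      U.domRestrict fun z => ∏ i, H i z ^ (k : Fin (n + 1) → ℕ) i) := fun j =>
    domRestrict_mem_span_of_sum_sq_norm_eq hUo hUc
      (fun k => Finset.analyticOnNhd_fun_prod _ fun i _ => (hH i).pow _) hF hFsum hdiag (j + 1)
  refine ⟨(rank_span_range_le_card hspan).trans_eq ?_, fun hli => ?_⟩
  · rw [Fintype.card_coe, card_piAntidiag_univ_fin]
  · have : Finite ℕ := hli.finite_of_le_span_finite _ _ (Set.range_subset_iff.2 hspan)
    exact not_finite ℕ

/-- If `(1 + Σ_{i=1}^n |h_i|²)^α = 1 + ∑'_j |f_j|²` on a nonempty connected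
open set `U ⊆ ℂ^d` with all functions holomorphic, then the span of the `f_j` (as functions
on `U`) has dimension at most `(n+α).choose n`; in particular the `f_j` are not
linearly independent. -/
theorem stmt_0 (d n : ℕ) (hd : 1 ≤ d) (hn : 1 ≤ n)
    (U : Set (Fin d → ℂ)) (hUo : IsOpen U) (hUc : IsConnected U)
    (α : ℕ) (hα : 0 < α)
    (h : Fin n → (Fin d → ℂ) → ℂ) (hh : ∀ i, AnalyticOn ℂ (h i) U)
    (f : ℕ → (Fin d → ℂ) → ℂ) (hf : ∀ j, AnalyticOn ℂ (f j) U)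
    (hsum : ∀ z ∈ U, Summable fun j => ‖f j z‖ ^ 2)
    (heq : ∀ z ∈ U, (1 + ∑ i, ‖h i z‖ ^ 2) ^ α = 1 + ∑' j, ‖f j z‖ ^ 2) :
    Module.rank ℂ ↥(Submodule.span ℂ (Set.range fun j => U.restrict (f j)))
        ≤ ((n + α).choose n : Cardinal) ∧
      ¬ LinearIndependent ℂ (fun j => U.restrict (f j)) :=
  stmt_0_general d n U hUo hUc α h hh f hf hsum heq
end

section
/- Let X be any set, let N ≥ 1, let g : Fin N → X → ℂ and f : ℕ → X → ℂ be families of functions such that for every x ∈ X the family (|f_j(x)|²)_{j∈ℕ} is summable, and such that for all x, y ∈ X one has ∑'_{j∈ℕ} f_j(x) · conj(f_j(y)) = Σ_{k=1}^N g_k(x) · conj(g_k(y)) (the left-hand side being absolutely summable by Cauchy–Schwarz). Then every f_j lies in the ℂ-linear span of {g₁, …, g_N} inside the space of functions X → ℂ. -/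
/-- If a hermitian kernel `∑' f_j(x)·conj(f_j(y))` of functions on an
arbitrary set `X` equals the rank-`N` kernel `Σ g_k(x)·conj(g_k(y))`, then every `f_j`
lies in the ℂ-linear span of the `g_k`. -/
theorem stmt_2 (X : Type*) (N : ℕ) (hN : 1 ≤ N)
    (g : Fin N → X → ℂ) (f : ℕ → X → ℂ)
    (hsum : ∀ x, Summable fun j => ‖f j x‖ ^ 2)
    (heq : ∀ x y : X,
      ∑' j, f j x * (starRingEnd ℂ) (f j y) = ∑ k, g k x * (starRingEnd ℂ) (g k y)) :
    ∀ j, f j ∈ Submodule.span ℂ (Set.range g) := by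
  classical
  have habs : ∀ x y : X, Summable fun j => f j x * (starRingEnd ℂ) (f j y) := by
    intro x y
    refine Summable.of_norm ?_
    refine Summable.of_nonneg_of_le (fun j => norm_nonneg _) (fun j => ?_)
      (((hsum x).add (hsum y)).div_const 2)
    rw [norm_mul]
    have h1 : ‖(starRingEnd ℂ) (f j y)‖ = ‖f j y‖ := norm_star _
    rw [h1]
    have := two_mul_le_add_sq ‖f j x‖ ‖f j y‖
    nlinarith [norm_nonneg (f j x), norm_nonneg (f j y)]
  intro j0
  by_contra hj0
  set V := Submodule.span ℂ (Set.range g) with hV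
  set W := V ⊔ Submodule.span ℂ {f j0} with hW
  have hfW : f j0 ∈ W := le_sup_right (α := Submodule ℂ (X → ℂ))
    (Submodule.mem_span_singleton_self _)
  have hgW : ∀ k, g k ∈ W := fun k =>
    le_sup_left (α := Submodule ℂ (X → ℂ)) (Submodule.subset_span ⟨k, rfl⟩)
  haveI : FiniteDimensional ℂ V := FiniteDimensional.span_of_finite ℂ (Set.finite_range g)
  haveI : FiniteDimensional ℂ (Submodule.span ℂ {f j0}) :=
    FiniteDimensional.span_of_finite ℂ (Set.finite_singleton _)
  haveI : FiniteDimensional ℂ W := Submodule.finiteDimensional_sup _ _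
  -- evaluation functionals on W
  set ε : X → Module.Dual ℂ W := fun x => (LinearMap.proj x).comp W.subtype with hε
  have hspan : Submodule.span ℂ (Set.range ε) = ⊤ := by
    have hbot : (Submodule.span ℂ (Set.range ε)).dualCoannihilator = ⊥ := by
      rw [Submodule.eq_bot_iff]
      intro w hw
      rw [Submodule.mem_dualCoannihilator] at hw
      have : ∀ x, (w : X → ℂ) x = 0 := fun x => hw (ε x) (Submodule.subset_span ⟨x, rfl⟩)
      exact Subtype.ext (funext this)
    have := Subspace.dualCoannihilator_dualAnnihilator_eq
      (W := Submodule.span ℂ (Set.range ε))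
    rw [hbot, Submodule.dualAnnihilator_bot] at this
    exact this.symm
  -- a functional vanishing on V with value 1 at f j0
  set VW : Submodule ℂ W := V.comap W.subtype with hVW
  set fW : W := ⟨f j0, hfW⟩ with hfWdef
  have hfVW : fW ∉ VW := fun h => hj0 h
  have hne : VW.mkQ fW ≠ 0 := by
    rw [Submodule.mkQ_apply, Ne, Submodule.Quotient.mk_eq_zero]
    exact hfVW
  obtain ⟨χ, hχ⟩ : ∃ χ : Module.Dual ℂ (W ⧸ VW), χ (VW.mkQ fW) ≠ 0 := by
    by_contra h
    push_neg at h
    exact hne ((Module.forall_dual_apply_eq_zero_iff ℂ _).mp h)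
  set ψ : Module.Dual ℂ W := (χ (VW.mkQ fW))⁻¹ • (χ.comp VW.mkQ) with hψdef
  have hψf : ψ fW = 1 := by
    simp only [hψdef, LinearMap.smul_apply, LinearMap.comp_apply, smul_eq_mul]
    exact inv_mul_cancel₀ hχ
  have hψ0 : ∀ w : W, (w : X → ℂ) ∈ V → ψ w = 0 := by
    intro w hw
    simp only [hψdef, LinearMap.smul_apply, LinearMap.comp_apply, smul_eq_mul,
      Submodule.mkQ_apply]
    have hz : (Submodule.Quotient.mk w : ↥W ⧸ VW) = 0 :=
      (Submodule.Quotient.mk_eq_zero _).mpr (Submodule.mem_comap.mpr hw)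
    rw [hz, map_zero, mul_zero]
  -- ψ as a combination of evaluations
  obtain ⟨c, hc⟩ : ∃ c : X →₀ ℂ, (c.sum fun x a => a • ε x) = ψ := by
    rw [← Finsupp.mem_span_range_iff_exists_finsupp, hspan]
    trivial
  set s := c.support with hs
  have hψeval : ∀ w : W, ψ w = ∑ x ∈ s, c x * (w : X → ℂ) x := by
    intro w
    rw [← hc, Finsupp.sum, LinearMap.sum_apply]
    refine Finset.sum_congr rfl fun x _ => ?_
    simp [hε, smul_eq_mul]
  have hg0 : ∀ k, ∑ x ∈ s, c x * g k x = 0 := by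
    intro k
    rw [← hψeval ⟨g k, hgW k⟩]
    exact hψ0 _ (Submodule.subset_span ⟨k, rfl⟩)
  have hf1 : ∑ x ∈ s, c x * f j0 x = 1 := by
    rw [← hψeval fW]
    exact hψf
  -- the coefficients a j
  set a : ℕ → ℂ := fun j => ∑ x ∈ s, c x * f j x with ha
  have h1 : ∀ j, a j * (starRingEnd ℂ) (a j) =
      ∑ x ∈ s, ∑ y ∈ s,
        (c x * (starRingEnd ℂ) (c y)) * (f j x * (starRingEnd ℂ) (f j y)) := by
    intro j
    rw [ha]
    simp only
    rw [map_sum, Finset.sum_mul_sum]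
    refine Finset.sum_congr rfl fun x _ => Finset.sum_congr rfl fun y _ => ?_
    rw [map_mul]
    ring
  have hsumm : ∀ x ∈ s, ∀ y ∈ s, Summable fun j =>
      (c x * (starRingEnd ℂ) (c y)) * (f j x * (starRingEnd ℂ) (f j y)) :=
    fun x _ y _ => (habs x y).mul_left _
  have hA : Summable fun j => a j * (starRingEnd ℂ) (a j) := by
    refine (summable_congr h1).mpr ?_
    exact summable_sum fun x hx => summable_sum fun y hy => hsumm x hx y hy
  have key : ∑' j, a j * (starRingEnd ℂ) (a j) = 0 := by
    rw [tsum_congr h1]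
    rw [Summable.tsum_finsetSum (fun x hx => summable_sum fun y hy => hsumm x hx y hy)]
    have : ∀ x ∈ s, ∑' j, ∑ y ∈ s,
        (c x * (starRingEnd ℂ) (c y)) * (f j x * (starRingEnd ℂ) (f j y)) =
        ∑ y ∈ s, (c x * (starRingEnd ℂ) (c y)) * ∑ k, g k x * (starRingEnd ℂ) (g k y) := by
      intro x hx
      rw [Summable.tsum_finsetSum (fun y hy => hsumm x hx y hy)]
      refine Finset.sum_congr rfl fun y _ => ?_
      rw [tsum_mul_left, heq x y]
    rw [Finset.sum_congr rfl this]
    -- now rearrange finite sums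
    have hre : ∑ x ∈ s, ∑ y ∈ s, (c x * (starRingEnd ℂ) (c y)) *
          ∑ k, g k x * (starRingEnd ℂ) (g k y) =
        ∑ k, (∑ x ∈ s, c x * g k x) * (starRingEnd ℂ) (∑ y ∈ s, c y * g k y) := by
      have : ∀ k : Fin N, (∑ x ∈ s, c x * g k x) * (starRingEnd ℂ) (∑ y ∈ s, c y * g k y) =
          ∑ x ∈ s, ∑ y ∈ s, (c x * (starRingEnd ℂ) (c y)) * (g k x * (starRingEnd ℂ) (g k y)) := by
        intro k
        rw [map_sum, Finset.sum_mul_sum]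
        refine Finset.sum_congr rfl fun x _ => Finset.sum_congr rfl fun y _ => ?_
        rw [map_mul]; ring
      calc ∑ x ∈ s, ∑ y ∈ s, (c x * (starRingEnd ℂ) (c y)) *
              ∑ k, g k x * (starRingEnd ℂ) (g k y)
          = ∑ x ∈ s, ∑ y ∈ s, ∑ k,
              (c x * (starRingEnd ℂ) (c y)) * (g k x * (starRingEnd ℂ) (g k y)) := by
            exact Finset.sum_congr rfl fun x _ => Finset.sum_congr rfl fun y _ =>
              Finset.mul_sum _ _ _
        _ = ∑ x ∈ s, ∑ k, ∑ y ∈ s,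
              (c x * (starRingEnd ℂ) (c y)) * (g k x * (starRingEnd ℂ) (g k y)) :=
            Finset.sum_congr rfl fun x _ => Finset.sum_comm
        _ = ∑ k, ∑ x ∈ s, ∑ y ∈ s,
              (c x * (starRingEnd ℂ) (c y)) * (g k x * (starRingEnd ℂ) (g k y)) :=
            Finset.sum_comm
        _ = ∑ k, (∑ x ∈ s, c x * g k x) * (starRingEnd ℂ) (∑ y ∈ s, c y * g k y) :=
            Finset.sum_congr rfl fun k _ => (this k).symm
    rw [hre]
    refine Finset.sum_eq_zero fun k _ => ?_
    rw [hg0 k, zero_mul]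
  -- conclude a j0 = 0, contradiction with a j0 = 1
  have hre : Summable fun j => (a j * (starRingEnd ℂ) (a j)).re :=
    (Complex.hasSum_iff _ _).mp hA.hasSum |>.1.summable
  have hre0 : ∑' j, (a j * (starRingEnd ℂ) (a j)).re = 0 := by
    have := (Complex.hasSum_iff _ _).mp hA.hasSum |>.1
    rw [key] at this
    simpa using this.tsum_eq
  have hterm : ∀ j, (a j * (starRingEnd ℂ) (a j)).re = Complex.normSq (a j) := by
    intro j
    rw [Complex.mul_conj]
    simp
  have hle : Complex.normSq (a j0) ≤ 0 := by
    rw [← hre0, ← hterm j0]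
    exact Summable.le_tsum hre j0 fun b _ => by rw [hterm b]; exact Complex.normSq_nonneg _
  have : a j0 = 0 := by
    have := le_antisymm hle (Complex.normSq_nonneg _)
    exact Complex.normSq_eq_zero.mp this
  rw [ha] at this
  simp only at this
  rw [hf1] at this
  exact one_ne_zero this
end

section
/- Let d ≥ 1 and let U be a nonempty connected open subset of ℂ^d. Let g₁, …, g_N : U → ℂ be holomorphic, and let (f_j)_{j∈ℕ} be a sequence of holomorphic functions U → ℂ such that for every z ∈ U the family (|f_j(z)|²)_{j∈ℕ} is summable and Σ_{k=1}^N |g_k(z)|² = ∑'_{j∈ℕ} |f_j(z)|². Then for all z, w ∈ U one has the polarized identity ∑'_{j∈ℕ} f_j(z) · conj(f_j(w)) = Σ_{k=1}^N g_k(z) · conj(g_k(w)) (the left-hand side being absolutely summable). -/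
/-!
Write `K z w = ∑' j, f j z * conj (f j w) - ∑ k, g k z * conj (g k w)`. By Dini's theorem the
partial sums of `∑ ‖f j‖ ^ 2` converge locally uniformly to the continuous function
`∑ ‖g k‖ ^ 2`, and the tail bound `‖a * b‖ ≤ (‖a‖ ^ 2 + ‖b‖ ^ 2) / 2` transfers this to the series
defining `K`. Hence `K` is holomorphic in `z` and antiholomorphic in `w` along complex lines, and
it vanishes on the diagonal. For `z, w` in a ball put `v = (I / 2) • (w - z)` and let `m` be the
midpoint: the curve `t ↦ (m + t • v, m + conj t • v)` lies on the diagonal for real `t` and passes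
through `(z, w)` at `t = I`, so the one-variable identity theorem gives `K z w = 0`. The identity
theorem along lines and the connectedness of `U` spread this from balls to all of `U`.
-/

open Complex Filter Finset Metric Set Topology
open scoped ComplexConjugate

lemma norm_mul_le_half_add_sq (x y : ℂ) : ‖x * y‖ ≤ (‖x‖ ^ 2 + ‖y‖ ^ 2) / 2 := by
  rw [norm_mul]
  nlinarith [sq_nonneg (‖x‖ - ‖y‖)]

lemma summable_mul_of_summable_norm_sq {ι : Type*} {a b : ι → ℂ}
    (ha : Summable fun j => ‖a j‖ ^ 2) (hb : Summable fun j => ‖b j‖ ^ 2) :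
    Summable fun j => a j * b j :=
  .of_norm_bounded ((ha.add hb).div_const 2) fun _ => norm_mul_le_half_add_sq _ _

lemma norm_tsum_mul_sub_sum_range_le {a b : ℕ → ℂ} {A B : ℝ}
    (ha : HasSum (fun j => ‖a j‖ ^ 2) A) (hb : HasSum (fun j => ‖b j‖ ^ 2) B) (n : ℕ) :
    ‖∑' j, a j * b j - ∑ j ∈ range n, a j * b j‖ ≤
      ((A - ∑ j ∈ range n, ‖a j‖ ^ 2) + (B - ∑ j ∈ range n, ‖b j‖ ^ 2)) / 2 := by
  have hab := (summable_mul_of_summable_norm_sq ha.summable hb.summable).hasSum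
  rw [← ((hasSum_nat_add_iff' n).mpr hab).tsum_eq]
  refine (tsum_of_norm_bounded ((hasSum_nat_add_iff' n).mpr ((ha.add hb).div_const 2))
    fun _ => norm_mul_le_half_add_sq _ _).trans_eq ?_
  rw [← sum_div, sum_add_distrib]
  ring

lemma tendstoLocallyUniformlyOn_sum_range_mul {α : Type*} [TopologicalSpace α] {s : Set α}
    {a b : ℕ → α → ℂ} {A B : α → ℝ}
    (ha : TendstoLocallyUniformlyOn (fun n x => ∑ j ∈ range n, ‖a j x‖ ^ 2) A atTop s)
    (hb : TendstoLocallyUniformlyOn (fun n x => ∑ j ∈ range n, ‖b j x‖ ^ 2) B atTop s) :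
    TendstoLocallyUniformlyOn (fun n x => ∑ j ∈ range n, a j x * b j x)
      (fun x => ∑' j, a j x * b j x) atTop s := by
  have hasSum_of {c : ℕ → α → ℂ} {C : α → ℝ}
      (hc : TendstoLocallyUniformlyOn (fun n x => ∑ j ∈ range n, ‖c j x‖ ^ 2) C atTop s)
      {x : α} (hx : x ∈ s) : HasSum (fun j => ‖c j x‖ ^ 2) (C x) :=
    (hasSum_iff_tendsto_nat_of_nonneg (fun _ => by positivity) _).mpr (hc.tendsto_at hx)
  rw [Metric.tendstoLocallyUniformlyOn_iff]
  intro ε hε x hx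
  obtain ⟨t, ht, hta⟩ := Metric.tendstoLocallyUniformlyOn_iff.mp ha ε hε x hx
  obtain ⟨t', ht', htb⟩ := Metric.tendstoLocallyUniformlyOn_iff.mp hb ε hε x hx
  refine ⟨t ∩ t' ∩ s, inter_mem (inter_mem ht ht') self_mem_nhdsWithin, ?_⟩
  filter_upwards [hta, htb] with n hna hnb y ⟨⟨hyt, hyt'⟩, hys⟩
  have hA := (le_abs_self _).trans_lt (hna y hyt)
  have hB := (le_abs_self _).trans_lt (hnb y hyt')
  rw [dist_eq_norm]
  linarith [norm_tsum_mul_sub_sum_range_le (hasSum_of ha hys) (hasSum_of hb hys) n]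

variable {E : Type*} [NormedAddCommGroup E] [NormedSpace ℂ E]

lemma Convex.setOf_add_smul_mem {C : Set E} (hC : Convex ℝ C) (a e : E) :
    Convex ℝ {t : ℂ | a + t • e ∈ C} :=
  (hC.translate_preimage_right a).linear_preimage
    ((LinearMap.toSpanSingleton ℂ E e).restrictScalars ℝ)

lemma Convex.setOf_add_conj_smul_mem {C : Set E} (hC : Convex ℝ C) (a e : E) :
    Convex ℝ {t : ℂ | a + conj t • e ∈ C} :=
  (hC.setOf_add_smul_mem a e).linear_preimage conjAe.toLinearMap

theorem eqOn_zero_of_differentiableOn_lines {U : Set E} (hU : IsOpen U) (hUc : IsPreconnected U)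
    {Φ : E → ℂ}
    (hΦ : ∀ v e : E, DifferentiableOn ℂ (fun t : ℂ => Φ (v + t • e)) {t | v + t • e ∈ U})
    {z : E} (hz : z ∈ U) (hΦz : Φ =ᶠ[𝓝 z] 0) : EqOn Φ 0 U := by
  suffices hsub : U ⊆ {w | Φ =ᶠ[𝓝 w] 0} from fun w hw => (hsub hw).eq_of_nhds
  refine hUc.subset_of_closure_inter_subset isOpen_setOfPred_eventually_nhds ⟨z, hz, hΦz⟩ ?_
  rintro w ⟨hwS, hwU⟩
  obtain ⟨r, hr, hrU⟩ := Metric.isOpen_iff.mp hU w hwU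
  obtain ⟨v, hvB, hvS⟩ := mem_closure_iff_nhds.mp hwS _ (ball_mem_nhds w hr)
  refine eventually_of_mem (ball_mem_nhds w hr) fun u hu => ?_
  have hline : Continuous fun t : ℂ => v + t • (u - v) := by fun_prop
  set D : Set ℂ := {t | v + t • (u - v) ∈ ball w r}
  have hφ : AnalyticOnNhd ℂ (fun t : ℂ => Φ (v + t • (u - v))) D :=
    ((hΦ v (u - v)).mono fun t ht => hrU ht).analyticOnNhd (isOpen_ball.preimage hline)
  have hφ0 : (fun t : ℂ => Φ (v + t • (u - v))) =ᶠ[𝓝 0] 0 :=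
    hvS.comp_tendsto (hline.tendsto' 0 v (by simp))
  simpa using hφ.eqOn_zero_of_preconnected_of_eventuallyEq_zero
    ((convex_ball w r).setOf_add_smul_mem v (u - v)).isPreconnected (by simpa [D] using hvB) hφ0
    (show (1 : ℂ) ∈ D by simpa [D] using hu)

lemma differentiableAt_mul_conj_line {F G : E → ℂ} {a b e e' : E} {t : ℂ}
    (hF : DifferentiableAt ℂ F (a + t • e)) (hG : DifferentiableAt ℂ G (b + conj t • e')) :
    DifferentiableAt ℂ (fun s : ℂ => F (a + s • e) * conj (G (b + conj s • e'))) t := by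
  have hlineF : DifferentiableAt ℂ (fun s : ℂ => a + s • e) t := by fun_prop
  have hlineG : DifferentiableAt ℂ (fun s : ℂ => b + s • e') (conj t) := by fun_prop
  exact (hF.comp t hlineF).mul (differentiableAt_conj_conj_iff.mpr (hG.comp (conj t) hlineG))

-- Holomorphy of `(z, w) ↦ K z (conj w)` along complex lines: all that the one-variable
-- identity theorem needs, and what a locally uniformly convergent kernel series provides.
def SesquiHolomorphicOn (K : E → E → ℂ) (U : Set E) : Prop :=
  ∀ a b e e' : E, DifferentiableOn ℂ (fun t : ℂ => K (a + t • e) (b + conj t • e'))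
    {t | a + t • e ∈ U ∧ b + conj t • e' ∈ U}

namespace SesquiHolomorphicOn

variable {K L : E → E → ℂ} {U : Set E}

lemma sub (hK : SesquiHolomorphicOn K U) (hL : SesquiHolomorphicOn L U) :
    SesquiHolomorphicOn (fun z w => K z w - L z w) U :=
  fun a b e e' => (hK a b e e').sub (hL a b e e')

theorem eq_zero_of_diag_of_convex (hK : SesquiHolomorphicOn K U) (hdiag : ∀ z ∈ U, K z z = 0)
    {C : Set E} (hCU : C ⊆ U) (hCo : IsOpen C) (hCc : Convex ℝ C) {z w : E} (hz : z ∈ C)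
    (hw : w ∈ C) : K z w = 0 := by
  set v : E := (I / 2) • (w - z)
  set m : E := z - I • v
  have hmz : m + I • v = z := by simp [m]
  have hmw : m + conj I • v = w := by
    simp only [m, v, conj_I, smul_smul]
    match_scalars <;> ring_nf <;> simp only [I_sq] <;> ring
  set D : Set ℂ := {t | m + t • v ∈ C ∧ m + conj t • v ∈ C}
  have hDo : IsOpen D := (hCo.preimage (by fun_prop)).inter (hCo.preimage (by fun_prop))
  have hDc : Convex ℝ D := (hCc.setOf_add_smul_mem m v).inter (hCc.setOf_add_conj_smul_mem m v)
  have hφ : AnalyticOnNhd ℂ (fun t => K (m + t • v) (m + conj t • v)) D :=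
    ((hK m m v v).mono fun t ht => ⟨hCU ht.1, hCU ht.2⟩).analyticOnNhd hDo
  have hm : m ∈ C := by
    convert hCc.add_smul_sub_mem hz hw (t := 1 / 2) ⟨by norm_num, by norm_num⟩ using 1
    simp only [m, v, ← Complex.coe_smul, smul_smul]
    match_scalars <;> ring_nf <;> simp only [I_sq] <;> ring
  have h0 : (0 : ℂ) ∈ D := by simpa [D] using hm
  have hreal : ∀ᶠ s : ℝ in 𝓝[≠] 0, K (m + (s : ℂ) • v) (m + conj (s : ℂ) • v) = 0 := by
    have : ∀ᶠ s : ℝ in 𝓝 0, (s : ℂ) ∈ D :=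
      continuous_ofReal.continuousAt.preimage_mem_nhds (by simpa using hDo.mem_nhds h0)
    filter_upwards [nhdsWithin_le_nhds this] with s hs
    rw [conj_ofReal]
    exact hdiag _ (hCU hs.1)
  have hofReal : Tendsto ((↑) : ℝ → ℂ) (𝓝[≠] 0) (𝓝[≠] 0) :=
    continuous_ofReal.continuousWithinAt.tendsto_nhdsWithin fun s hs => by simpa using hs
  have hfreq : ∃ᶠ t : ℂ in 𝓝[≠] 0, K (m + t • v) (m + conj t • v) = 0 :=
    hofReal.frequently (p := fun t : ℂ => K (m + t • v) (m + conj t • v) = 0) hreal.frequently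
  have := hφ.eqOn_zero_of_preconnected_of_frequently_eq_zero hDc.isPreconnected h0 hfreq
    (show I ∈ D from ⟨hmz ▸ hz, hmw ▸ hw⟩)
  simpa only [Pi.zero_apply, hmz, hmw] using this

theorem eq_zero_of_diag (hK : SesquiHolomorphicOn K U) (hU : IsOpen U) (hUc : IsPreconnected U)
    (hdiag : ∀ z ∈ U, K z z = 0) {z w : E} (hz : z ∈ U) (hw : w ∈ U) : K z w = 0 := by
  have hlines : ∀ v e : E,
      DifferentiableOn ℂ (fun t : ℂ => K (v + t • e) w) {t | v + t • e ∈ U} := by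
    simpa [hw] using fun v e => hK v w e 0
  obtain ⟨r, hr, hrU⟩ := Metric.isOpen_iff.mp hU w hw
  have hnear : (fun v => K v w) =ᶠ[𝓝 w] 0 :=
    eventually_of_mem (ball_mem_nhds w hr) fun v hv =>
      hK.eq_zero_of_diag_of_convex hdiag hrU isOpen_ball (convex_ball w r) hv (mem_ball_self hr)
  exact eqOn_zero_of_differentiableOn_lines hU hUc hlines hw hnear hz

end SesquiHolomorphicOn

lemma sesquiHolomorphicOn_sum {ι : Type*} [Fintype ι] {g : ι → E → ℂ} {U : Set E}
    (hU : IsOpen U) (hg : ∀ k, DifferentiableOn ℂ (g k) U) :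
    SesquiHolomorphicOn (fun z w => ∑ k, g k z * conj (g k w)) U := by
  intro a b e e' t ⟨ha, hb⟩
  refine DifferentiableAt.differentiableWithinAt ?_
  exact DifferentiableAt.fun_sum fun k _ => differentiableAt_mul_conj_line
    ((hg k).differentiableAt (hU.mem_nhds ha)) ((hg k).differentiableAt (hU.mem_nhds hb))

lemma sesquiHolomorphicOn_tsum {f : ℕ → E → ℂ} {U : Set E} {S : E → ℝ} (hU : IsOpen U)
    (hf : ∀ j, DifferentiableOn ℂ (f j) U) (hS : ContinuousOn S U)
    (hsum : ∀ z ∈ U, HasSum (fun j => ‖f j z‖ ^ 2) (S z)) :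
    SesquiHolomorphicOn (fun z w => ∑' j, f j z * conj (f j w)) U := by
  have hdini : TendstoLocallyUniformlyOn (fun n z => ∑ j ∈ range n, ‖f j z‖ ^ 2) S atTop U :=
    Monotone.tendstoLocallyUniformlyOn_of_forall_tendsto
      (fun n => continuousOn_finsetSum _ fun j _ => (hf j).continuousOn.norm.pow 2)
      (fun z _ => monotone_nat_of_le_succ fun n => by
        rw [sum_range_succ]; exact le_add_of_nonneg_right (by positivity))
      hS (fun z hz => (hsum z hz).tendsto_sum_nat)
  intro a b e e'
  have hp : Continuous fun t : ℂ => a + t • e := by fun_prop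
  have hq : Continuous fun t : ℂ => b + conj t • e' := by fun_prop
  refine (tendstoLocallyUniformlyOn_sum_range_mul (B := S ∘ fun t => b + conj t • e')
    (hdini.comp _ (fun t ht => ht.1) hp.continuousOn) ?_).differentiableOn ?_
    ((hU.preimage hp).inter (hU.preimage hq))
  · simpa only [Function.comp_def, norm_conj] using
      hdini.comp _ (fun t ht => ht.2) hq.continuousOn
  · refine Eventually.of_forall fun n => DifferentiableOn.fun_sum fun j _ t ⟨ha, hb⟩ => ?_
    exact (differentiableAt_mul_conj_line ((hf j).differentiableAt (hU.mem_nhds ha))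
      ((hf j).differentiableAt (hU.mem_nhds hb))).differentiableWithinAt

theorem stmt_3_general (d : ℕ) (N : ℕ)
    (U : Set (Fin d → ℂ)) (hUo : IsOpen U) (hUc : IsConnected U)
    (g : Fin N → (Fin d → ℂ) → ℂ) (hg : ∀ k, AnalyticOn ℂ (g k) U)
    (f : ℕ → (Fin d → ℂ) → ℂ) (hf : ∀ j, AnalyticOn ℂ (f j) U)
    (hsum : ∀ z ∈ U, Summable fun j => ‖f j z‖ ^ 2)
    (heq : ∀ z ∈ U, ∑ k, ‖g k z‖ ^ 2 = ∑' j, ‖f j z‖ ^ 2) :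
    ∀ z ∈ U, ∀ w ∈ U,
      (Summable fun j => f j z * (starRingEnd ℂ) (f j w)) ∧
      ∑' j, f j z * (starRingEnd ℂ) (f j w) = ∑ k, g k z * (starRingEnd ℂ) (g k w) := by
  intro z hz w hw
  have hS : ContinuousOn (fun u => ∑ k, ‖g k u‖ ^ 2) U :=
    continuousOn_finsetSum _ fun k _ => (hg k).continuousOn.norm.pow 2
  have hasSum_f (u) (hu : u ∈ U) : HasSum (fun j => ‖f j u‖ ^ 2) (∑ k, ‖g k u‖ ^ 2) :=
    heq u hu ▸ (hsum u hu).hasSum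
  have hK := (sesquiHolomorphicOn_tsum hUo (fun j => (hf j).differentiableOn) hS hasSum_f).sub
    (sesquiHolomorphicOn_sum hUo fun k => (hg k).differentiableOn)
  have hdiag (u) (hu : u ∈ U) :
      ∑' j, f j u * conj (f j u) - ∑ k, g k u * conj (g k u) = 0 := by
    simp only [mul_conj', ← ofReal_pow, ← ofReal_tsum, ← ofReal_sum, heq u hu, sub_self]
  exact ⟨summable_mul_of_summable_norm_sq (hsum z hz) (by simpa only [norm_conj] using hsum w hw),
    sub_eq_zero.mp (hK.eq_zero_of_diag hUo hUc.isPreconnected hdiag hz hw)⟩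

/-- Polarization: if `Σ_{k=1}^N |g_k|² = ∑'_j |f_j|²` on a nonempty connected
open `U ⊆ ℂ^d` with all functions holomorphic, then for all `z, w ∈ U` the polarized
kernels agree: `∑'_j f_j(z)·conj(f_j(w)) = Σ_k g_k(z)·conj(g_k(w))`, the left-hand side
being (absolutely) summable. -/
theorem stmt_3 (d : ℕ) (hd : 1 ≤ d) (N : ℕ)
    (U : Set (Fin d → ℂ)) (hUo : IsOpen U) (hUc : IsConnected U)
    (g : Fin N → (Fin d → ℂ) → ℂ) (hg : ∀ k, AnalyticOn ℂ (g k) U)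
    (f : ℕ → (Fin d → ℂ) → ℂ) (hf : ∀ j, AnalyticOn ℂ (f j) U)
    (hsum : ∀ z ∈ U, Summable fun j => ‖f j z‖ ^ 2)
    (heq : ∀ z ∈ U, ∑ k, ‖g k z‖ ^ 2 = ∑' j, ‖f j z‖ ^ 2) :
    ∀ z ∈ U, ∀ w ∈ U,
      (Summable fun j => f j z * (starRingEnd ℂ) (f j w)) ∧
      ∑' j, f j z * (starRingEnd ℂ) (f j w) = ∑ k, g k z * (starRingEnd ℂ) (g k w) :=
  stmt_3_general d N U hUo hUc g hg f hf hsum heq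
end

section
/- Let U and V be nonempty connected open subsets of ℂ, let φ : U → ℂ be holomorphic and nonconstant with φ(U) ⊆ V, and let (f_j)_{j∈ι} be a family of holomorphic functions V → ℂ that is linearly independent over ℂ. Then the family of composites (f_j ∘ φ)_{j∈ι}, as functions U → ℂ, is linearly independent over ℂ. -/
/-!
The image `φ '' U` is open by the open mapping theorem. A linear relation among the `f j ∘ φ`
on `U` is a relation among the `f j` on this nonempty open subset of `V`, and by the identity
theorem it then holds on all of the connected set `V`.
-/

open Set Topology

theorem LinearIndependent.domRestrict_comp {ι α β R M : Type*} [Semiring R]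
    [AddCommMonoid M] [Module R M] {f : ι → β → M} {φ : α → β} {U : Set α}
    (hli : LinearIndependent R fun j => (φ '' U).domRestrict (f j)) :
    LinearIndependent R fun j => U.domRestrict (f j ∘ φ) := by
  have hinj : Function.Injective (LinearMap.funLeft R M (imageFactorization φ U)) :=
    LinearMap.funLeft_injective_of_surjective R M _ imageFactorization_surjective
  exact hli.map_injOn _ hinj.injOn

theorem LinearIndependent.domRestrict_of_analyticOnNhd {ι 𝕜 E F : Type*}
    [NontriviallyNormedField 𝕜] [NormedAddCommGroup E] [NormedSpace 𝕜 E]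
    [NormedAddCommGroup F] [NormedSpace 𝕜 F] {f : ι → E → F} {V W : Set E}
    (hf : ∀ j, AnalyticOnNhd 𝕜 (f j) V) (hV : IsPreconnected V)
    (hWo : IsOpen W) (hWne : W.Nonempty) (hWV : W ⊆ V)
    (hli : LinearIndependent 𝕜 fun j => V.domRestrict (f j)) :
    LinearIndependent 𝕜 fun j => W.domRestrict (f j) := by
  rw [linearIndependent_iff'] at hli ⊢
  intro s c hc
  refine hli s c ?_
  set g : E → F := ∑ i ∈ s, c i • f i
  have hsum : ∀ T : Set E, ∑ i ∈ s, c i • T.domRestrict (f i) = T.domRestrict g := by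
    intro T
    ext z
    simp [g, Finset.sum_apply, domRestrict_apply]
  have hgV : AnalyticOnNhd 𝕜 g V :=
    Finset.analyticOnNhd_sum _ fun i _ => analyticOnNhd_const.smul (hf i)
  obtain ⟨w, hw⟩ := hWne
  have hg_near : g =ᶠ[𝓝 w] 0 :=
    Filter.eventuallyEq_of_mem (hWo.mem_nhds hw) fun z hz =>
      congrFun ((hsum W).symm.trans hc) ⟨z, hz⟩
  have hg_zero : EqOn g 0 V :=
    hgV.eqOn_zero_of_preconnected_of_eventuallyEq_zero hV (hWV hw) hg_near
  rw [hsum]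
  exact funext fun z => hg_zero z.2

/-- Precomposition with a nonconstant holomorphic map between nonempty
connected open subsets of ℂ preserves linear independence of families of holomorphic
functions. -/
theorem stmt_5 {ι : Type*} (U V : Set ℂ)
    (hUo : IsOpen U) (hUc : IsConnected U)
    (hVo : IsOpen V) (hVc : IsConnected V)
    (φ : ℂ → ℂ) (hφ : AnalyticOn ℂ φ U) (hφUV : Set.MapsTo φ U V)
    (hφnc : ¬ ∃ c : ℂ, ∀ z ∈ U, φ z = c)
    (f : ι → ℂ → ℂ) (hf : ∀ j, AnalyticOn ℂ (f j) V)
    (hli : LinearIndependent ℂ fun j => V.restrict (f j)) :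
    LinearIndependent ℂ fun j => U.restrict (f j ∘ φ) := by
  have hφ_open : IsOpen (φ '' U) :=
    ((hUo.analyticOn_iff_analyticOnNhd.1 hφ).is_constant_or_isOpen
      hUc.isPreconnected).resolve_left hφnc U subset_rfl hUo
  have hli_image : LinearIndependent ℂ fun j => (φ '' U).domRestrict (f j) :=
    hli.domRestrict_of_analyticOnNhd (fun j => hVo.analyticOn_iff_analyticOnNhd.1 (hf j))
      hVc.isPreconnected hφ_open (hUc.nonempty.image φ) hφUV.image_subset
  exact hli_image.domRestrict_comp
end
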